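/- (Grouped force on the first bead of a particle in bosonic PIMD with PBC.) With Z(r) = (1/N!)·∑_{σ} ∑_{w} exp(−βE^{σ,w}(r)) and V = −(1/β)·log Z, and with Pr denoting probabilities of events under the Boltzmann distribution Pr(σ,w) = exp(−βE^{σ,w})/(N!·Z), for every particle ℓ and coordinate i: −∂V/∂(r_ℓ^1)_i = ∑_{ℓ'=1}^{N} ∑_{w∈Λ} Pr(σ(ℓ') = ℓ and w_{ℓ'}^P = w) · (−2c)·(r_ℓ^1 − r_{ℓ'}^P − w·L)_i + ∑_{w∈Λ} Pr(w_ℓ^1 = w) · (−2c)·(r_ℓ^1 + w·L − r_ℓ^2)_i (requiring P ≥ 2 for the second term). -/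

import Mathlib

open Finset Real

noncomputable section

/-- Winding window: integer vectors `w : Fin d → ℤ` with `-W ≤ w i ≤ W` in every coordinate. -/
def windowSet (d W : ℕ) : Finset (Fin d → ℤ) :=
  Fintype.piFinset fun _ => Finset.Icc (-(W : ℤ)) (W : ℤ)

/-- The set of all winding assignments `w : Fin N → Fin P → Λ`. -/
def WAll (N P d W : ℕ) : Finset (Fin N → Fin P → Fin d → ℤ) :=
  Fintype.piFinset fun _ => Fintype.piFinset fun _ => windowSet d W

/-- The last bead (bead `P`, zero-indexed `P-1`). -/
def lastIdx (P : ℕ) [NeZero P] : Fin P :=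
  ⟨P - 1, Nat.sub_lt (Nat.pos_of_ne_zero (NeZero.ne P)) Nat.one_pos⟩

/-- Bead `P-1` (zero-indexed `P-2`; meaningful for `P ≥ 2`). -/
def prevIdx (P : ℕ) [NeZero P] : Fin P :=
  ⟨P - 2, Nat.sub_lt (Nat.pos_of_ne_zero (NeZero.ne P)) Nat.two_pos⟩

/-- Configuration spring energy `E^{σ,w}`: the bead after the last bead of particle `ℓ`
is the first bead of particle `σ(ℓ)`. -/
def Eperm (N P d : ℕ) [NeZero P] (c L : ℝ) (r : Fin N → Fin P → Fin d → ℝ)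
    (σ : Equiv.Perm (Fin N)) (w : Fin N → Fin P → Fin d → ℤ) : ℝ :=
  c * ∑ ℓ : Fin N, ∑ j : Fin P, ∑ i : Fin d,
    (r ℓ j i + (w ℓ j i : ℝ) * L -
      (if h : j.val + 1 < P then r ℓ ⟨j.val + 1, h⟩ i else r (σ ℓ) 0 i)) ^ 2

/-- Bosonic configuration sum `Z(r) = (1/N!) ∑_σ ∑_w exp(-βE^{σ,w}(r))`. -/
def Zb (N P d W : ℕ) [NeZero P] (β c L : ℝ) (r : Fin N → Fin P → Fin d → ℝ) : ℝ :=
  (1 / (Nat.factorial N : ℝ)) *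
    ∑ σ : Equiv.Perm (Fin N), ∑ w ∈ WAll N P d W, Real.exp (-(β * Eperm N P d c L r σ w))

/-- Bosonic ring-polymer potential with PBC: `V(r) = -(1/β) log Z(r)`. -/
def Vb (N P d W : ℕ) [NeZero P] (β c L : ℝ) (r : Fin N → Fin P → Fin d → ℝ) : ℝ :=
  -(1 / β) * Real.log (Zb N P d W β c L r)

/-- Replace the `i`-th coordinate of bead `j` of particle `ℓ` by `t`. -/
def updR {N P d : ℕ} (r : Fin N → Fin P → Fin d → ℝ) (ℓ : Fin N) (j : Fin P) (i : Fin d)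
    (t : ℝ) : Fin N → Fin P → Fin d → ℝ :=
  Function.update r ℓ (Function.update (r ℓ) j (Function.update (r ℓ j) i t))

/-!
The potential is a free energy, so its derivative is the Boltzmann average of `∂E^{σ,w}`.
Only two springs of a configuration contain `r_ℓ^1`: the interior spring `r_ℓ^1 → r_ℓ^2`, and
the exterior spring entering it from the last bead of particle `σ⁻¹(ℓ)`. Grouping the
configurations by the winding of the interior spring, resp. by the pair `(σ⁻¹(ℓ), winding)`
of the exterior one, turns the average into the stated sums of probabilities.
-/

lemma hasDerivAt_neg_inv_mul_log_mul_sum_exp {ι : Type*} {s : Finset ι} (hs : s.Nonempty)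
    {a β t : ℝ} (ha : a ≠ 0) (hβ : β ≠ 0) {E : ι → ℝ → ℝ} {E' : ι → ℝ}
    (hE : ∀ k ∈ s, HasDerivAt (E k) (E' k) t) :
    HasDerivAt (fun u => -(1 / β) * Real.log (a * ∑ k ∈ s, Real.exp (-(β * E k u))))
      ((∑ k ∈ s, Real.exp (-(β * E k t)) * E' k) / ∑ k ∈ s, Real.exp (-(β * E k t))) t := by
  have hS : 0 < ∑ k ∈ s, Real.exp (-(β * E k t)) := sum_pos (fun _ _ => Real.exp_pos _) hs
  have hZ := (HasDerivAt.fun_sum fun k hk => ((hE k hk).const_mul β).fun_neg.exp).const_mul a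
  refine ((hZ.log (mul_ne_zero ha hS.ne')).const_mul _).congr_deriv ?_
  have hsum : ∑ k ∈ s, Real.exp (-(β * E k t)) * -(β * E' k) =
      -β * ∑ k ∈ s, Real.exp (-(β * E k t)) * E' k := by
    rw [mul_sum]; exact sum_congr rfl fun _ _ => by ring
  rw [hsum]
  field_simp

lemma sum_fiberwise_mul_of_maps_to {ι κ R : Type*} [DecidableEq κ] [NonUnitalNonAssocSemiring R]
    {s : Finset ι} {t : Finset κ} {g : ι → κ} (h : ∀ x ∈ s, g x ∈ t) (p : ι → R) (F : κ → R) :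
    ∑ y ∈ t, (∑ x ∈ s with g x = y, p x) * F y = ∑ x ∈ s, p x * F (g x) := by
  simp_rw [sum_mul]
  rw [← sum_fiberwise_of_maps_to h]
  exact sum_congr rfl fun y _ => sum_congr rfl fun x hx => by rw [(mem_filter.1 hx).2]

lemma sum_sum_filter_perm_apply_eq {α M : Type*} [Fintype α] [DecidableEq α] [AddCommMonoid M]
    (b : α) (G : α → Equiv.Perm α → M) :
    ∑ a, ∑ σ ∈ univ.filter (fun σ : Equiv.Perm α => σ a = b), G a σ = ∑ σ, G (σ.symm b) σ := by
  simp_rw [sum_filter, ← Equiv.eq_symm_apply]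
  rw [sum_comm]
  simp

section

variable {N P d : ℕ}

lemma updR_apply (r : Fin N → Fin P → Fin d → ℝ) (ℓ : Fin N) (j : Fin P) (i : Fin d)
    (t : ℝ) (ℓ' : Fin N) (j' : Fin P) (i' : Fin d) :
    updR r ℓ j i t ℓ' j' i' = if ℓ' = ℓ ∧ j' = j ∧ i' = i then t else r ℓ' j' i' := by
  unfold updR
  rcases eq_or_ne ℓ' ℓ with rfl | h1
  · rcases eq_or_ne j' j with rfl | h2
    · rcases eq_or_ne i' i with rfl | h3 <;> simp [*]
    · simp [h2]
  · simp [h1]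

lemma updR_self (r : Fin N → Fin P → Fin d → ℝ) (ℓ : Fin N) (j : Fin P) (i : Fin d) :
    updR r ℓ j i (r ℓ j i) = r := by
  simp [updR]

lemma hasDerivAt_updR_apply (r : Fin N → Fin P → Fin d → ℝ) (ℓ : Fin N) (j : Fin P)
    (i : Fin d) (t : ℝ) (ℓ' : Fin N) (j' : Fin P) (i' : Fin d) :
    HasDerivAt (fun t => updR r ℓ j i t ℓ' j' i')
      (if ℓ' = ℓ ∧ j' = j ∧ i' = i then 1 else 0) t := by
  simp only [updR_apply]
  split_ifs
  · exact hasDerivAt_id t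
  · exact hasDerivAt_const t _

lemma windowSet_nonempty (d W : ℕ) : (windowSet d W).Nonempty :=
  ⟨0, Fintype.mem_piFinset.2 fun _ => by simp⟩

lemma WAll_nonempty (N P d W : ℕ) : (WAll N P d W).Nonempty :=
  Fintype.piFinset_nonempty.2 fun _ => Fintype.piFinset_nonempty.2 fun _ => windowSet_nonempty d W

lemma mem_windowSet_of_mem_WAll {W : ℕ} {w : Fin N → Fin P → Fin d → ℤ}
    (hw : w ∈ WAll N P d W) (ℓ : Fin N) (j : Fin P) : w ℓ j ∈ windowSet d W :=
  Fintype.mem_piFinset.1 (Fintype.mem_piFinset.1 hw ℓ) j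

lemma sum_windowSet_mul_sum_filter_winding_eq {W : ℕ} (ℓ : Fin N) (j : Fin P)
    (e : Equiv.Perm (Fin N) → (Fin N → Fin P → Fin d → ℤ) → ℝ) (F : (Fin d → ℤ) → ℝ) :
    ∑ w ∈ windowSet d W,
        (∑ σ : Equiv.Perm (Fin N), ∑ w' ∈ (WAll N P d W).filter (fun w' => w' ℓ j = w), e σ w') *
          F w =
      ∑ σ : Equiv.Perm (Fin N), ∑ w' ∈ WAll N P d W, e σ w' * F (w' ℓ j) := by
  simp_rw [sum_comm (s := univ)]
  rw [sum_fiberwise_mul_of_maps_to (fun w' hw' => mem_windowSet_of_mem_WAll hw' ℓ j)]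
  simp_rw [sum_mul]

lemma sum_windowSet_mul_sum_filter_link_eq {W : ℕ} (ℓ : Fin N) (j : Fin P)
    (e : Equiv.Perm (Fin N) → (Fin N → Fin P → Fin d → ℤ) → ℝ)
    (F : Fin N → (Fin d → ℤ) → ℝ) :
    ∑ ℓ' : Fin N, ∑ w ∈ windowSet d W,
        (∑ σ ∈ univ.filter (fun σ : Equiv.Perm (Fin N) => σ ℓ' = ℓ),
          ∑ w' ∈ (WAll N P d W).filter (fun w' => w' ℓ' j = w), e σ w') * F ℓ' w =
      ∑ σ : Equiv.Perm (Fin N), ∑ w' ∈ WAll N P d W, e σ w' * F (σ.symm ℓ) (w' (σ.symm ℓ) j) := by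
  rw [← sum_sum_filter_perm_apply_eq ℓ
    (fun ℓ' σ => ∑ w' ∈ WAll N P d W, e σ w' * F ℓ' (w' ℓ' j))]
  refine sum_congr rfl fun ℓ' _ => ?_
  simp_rw [sum_comm (s := univ.filter _)]
  rw [sum_fiberwise_mul_of_maps_to (fun w' hw' => mem_windowSet_of_mem_WAll hw' ℓ' j)]
  simp_rw [sum_mul]

variable [NeZero P]

def nextBead (r : Fin N → Fin P → Fin d → ℝ) (σ : Equiv.Perm (Fin N)) (ℓ : Fin N) (j : Fin P)
    (i : Fin d) : ℝ :=
  if h : j.val + 1 < P then r ℓ ⟨j.val + 1, h⟩ i else r (σ ℓ) 0 i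

def springVec (L : ℝ) (r : Fin N → Fin P → Fin d → ℝ) (σ : Equiv.Perm (Fin N))
    (w : Fin N → Fin P → Fin d → ℤ) (ℓ : Fin N) (j : Fin P) (i : Fin d) : ℝ :=
  r ℓ j i + (w ℓ j i : ℝ) * L - nextBead r σ ℓ j i

lemma Eperm_eq_sum_springVec_sq (c L : ℝ) (r : Fin N → Fin P → Fin d → ℝ)
    (σ : Equiv.Perm (Fin N)) (w : Fin N → Fin P → Fin d → ℤ) :
    Eperm N P d c L r σ w = c * ∑ ℓ, ∑ j, ∑ i, springVec L r σ w ℓ j i ^ 2 :=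
  rfl

lemma succ_lt_iff_ne_lastIdx (j : Fin P) : j.val + 1 < P ↔ j ≠ lastIdx P := by
  simp only [Ne, Fin.ext_iff, lastIdx]
  omega

lemma nextBead_zero (hP : 2 ≤ P) (r : Fin N → Fin P → Fin d → ℝ) (σ : Equiv.Perm (Fin N))
    (ℓ : Fin N) (i : Fin d) : nextBead r σ ℓ 0 i = r ℓ 1 i := by
  have h : (0 : Fin P).val + 1 < P := by simp only [Fin.val_zero]; omega
  have h1 : (⟨(0 : Fin P).val + 1, h⟩ : Fin P) = 1 :=
    Fin.ext (by simp only [Fin.val_zero, Fin.val_one', Nat.mod_eq_of_lt (show 1 < P by omega)])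
  rw [nextBead, dif_pos h, h1]

lemma nextBead_lastIdx (r : Fin N → Fin P → Fin d → ℝ) (σ : Equiv.Perm (Fin N))
    (ℓ : Fin N) (i : Fin d) : nextBead r σ ℓ (lastIdx P) i = r (σ ℓ) 0 i := by
  rw [nextBead, dif_neg (by simp [succ_lt_iff_ne_lastIdx])]

lemma hasDerivAt_nextBead_updR (r : Fin N → Fin P → Fin d → ℝ) (σ : Equiv.Perm (Fin N))
    (ℓ : Fin N) (i : Fin d) (t : ℝ) (ℓ' : Fin N) (j : Fin P) (i' : Fin d) :
    HasDerivAt (fun t => nextBead (updR r ℓ 0 i t) σ ℓ' j i')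
      (if ℓ' = σ.symm ℓ ∧ j = lastIdx P ∧ i' = i then 1 else 0) t := by
  simp only [nextBead]
  by_cases hj : j.val + 1 < P
  · simp only [dif_pos hj]
    convert hasDerivAt_updR_apply r ℓ 0 i t ℓ' _ i' using 1
    have hj' : j ≠ lastIdx P := (succ_lt_iff_ne_lastIdx j).1 hj
    have h0 : (⟨j.val + 1, hj⟩ : Fin P) ≠ 0 := fun h => by simpa using congrArg Fin.val h
    simp [hj', h0]
  · simp only [dif_neg hj]
    convert hasDerivAt_updR_apply r ℓ 0 i t (σ ℓ') 0 i' using 1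
    rw [succ_lt_iff_ne_lastIdx, not_not] at hj
    simp [hj, Equiv.eq_symm_apply]

lemma hasDerivAt_springVec_updR (L : ℝ) (r : Fin N → Fin P → Fin d → ℝ)
    (σ : Equiv.Perm (Fin N)) (w : Fin N → Fin P → Fin d → ℤ) (ℓ : Fin N) (i : Fin d) (t : ℝ)
    (ℓ' : Fin N) (j : Fin P) (i' : Fin d) :
    HasDerivAt (fun t => springVec L (updR r ℓ 0 i t) σ w ℓ' j i')
      ((if ℓ' = ℓ ∧ j = 0 ∧ i' = i then 1 else 0) -
        if ℓ' = σ.symm ℓ ∧ j = lastIdx P ∧ i' = i then 1 else 0) t :=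
  ((hasDerivAt_updR_apply r ℓ 0 i t ℓ' j i').add_const _).sub
    (hasDerivAt_nextBead_updR r σ ℓ i t ℓ' j i')

lemma hasDerivAt_Eperm_updR (hP : 2 ≤ P) (c L : ℝ) (r : Fin N → Fin P → Fin d → ℝ)
    (σ : Equiv.Perm (Fin N)) (w : Fin N → Fin P → Fin d → ℤ) (ℓ : Fin N) (i : Fin d) :
    HasDerivAt (fun t => Eperm N P d c L (updR r ℓ 0 i t) σ w)
      (2 * c * (r ℓ 0 i + (w ℓ 0 i : ℝ) * L - r ℓ 1 i) -
        2 * c * (r (σ.symm ℓ) (lastIdx P) i + (w (σ.symm ℓ) (lastIdx P) i : ℝ) * L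
          - r ℓ 0 i)) (r ℓ 0 i) := by
  simp only [Eperm_eq_sum_springVec_sq]
  refine (HasDerivAt.const_mul c <| HasDerivAt.fun_sum fun ℓ' _ =>
    HasDerivAt.fun_sum fun j _ => HasDerivAt.fun_sum fun i' _ =>
      (hasDerivAt_springVec_updR L r σ w ℓ i (r ℓ 0 i) ℓ' j i').fun_pow 2).congr_deriv ?_
  simp [updR_self, mul_sub, sum_sub_distrib, ite_and, springVec, nextBead_zero hP,
    nextBead_lastIdx]
  ring

lemma natCast_factorial_mul_Zb (W : ℕ) (β c L : ℝ) (r : Fin N → Fin P → Fin d → ℝ) :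
    (N.factorial : ℝ) * Zb N P d W β c L r =
      ∑ σ : Equiv.Perm (Fin N), ∑ w ∈ WAll N P d W, Real.exp (-(β * Eperm N P d c L r σ w)) := by
  rw [Zb, ← mul_assoc, mul_one_div_cancel (by positivity), one_mul]

lemma hasDerivAt_Vb_comp {W : ℕ} {β : ℝ} (hβ : β ≠ 0) (c L : ℝ)
    {f : ℝ → Fin N → Fin P → Fin d → ℝ} {t : ℝ}
    {E' : Equiv.Perm (Fin N) → (Fin N → Fin P → Fin d → ℤ) → ℝ}
    (hE : ∀ σ w, HasDerivAt (fun u => Eperm N P d c L (f u) σ w) (E' σ w) t) :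
    HasDerivAt (fun u => Vb N P d W β c L (f u))
      ((∑ σ, ∑ w ∈ WAll N P d W, Real.exp (-(β * Eperm N P d c L (f t) σ w)) * E' σ w) /
        ∑ σ, ∑ w ∈ WAll N P d W, Real.exp (-(β * Eperm N P d c L (f t) σ w))) t := by
  simp only [Vb, Zb, ← sum_product']
  exact hasDerivAt_neg_inv_mul_log_mul_sum_exp (univ_nonempty.product (WAll_nonempty N P d W))
    (by positivity) hβ fun k _ => hE k.1 k.2

end

theorem stmt14_general (N P d W : ℕ) [NeZero P] (hP : 2 ≤ P)
    (β L c : ℝ) (hβ : 0 < β)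
    (r : Fin N → Fin P → Fin d → ℝ) (ℓ : Fin N) (i : Fin d) :
    HasDerivAt (fun t => Vb N P d W β c L (updR r ℓ 0 i t))
      (-((∑ ℓ' : Fin N, ∑ w ∈ windowSet d W,
            ((∑ σ ∈ Finset.univ.filter (fun σ : Equiv.Perm (Fin N) => σ ℓ' = ℓ),
                ∑ w' ∈ (WAll N P d W).filter (fun w' => w' ℓ' (lastIdx P) = w),
                  Real.exp (-(β * Eperm N P d c L r σ w'))) /
                ((Nat.factorial N : ℝ) * Zb N P d W β c L r)) *
              ((-2 * c) * (r ℓ 0 i - r ℓ' (lastIdx P) i - (w i : ℝ) * L))) +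
          ∑ w ∈ windowSet d W,
            ((∑ σ : Equiv.Perm (Fin N),
                ∑ w' ∈ (WAll N P d W).filter (fun w' => w' ℓ 0 = w),
                  Real.exp (-(β * Eperm N P d c L r σ w'))) /
                ((Nat.factorial N : ℝ) * Zb N P d W β c L r)) *
              ((-2 * c) * (r ℓ 0 i + (w i : ℝ) * L - r ℓ 1 i))))
      (r ℓ 0 i) := by
  have hV := hasDerivAt_Vb_comp (W := W) hβ.ne' c L (hasDerivAt_Eperm_updR hP c L r · · ℓ i)
  rw [updR_self] at hV
  refine hV.congr_deriv ?_
  rw [natCast_factorial_mul_Zb]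
  simp only [sum_div]
  rw [sum_windowSet_mul_sum_filter_link_eq, sum_windowSet_mul_sum_filter_winding_eq, ← sum_add_distrib,
    ← sum_neg_distrib]
  refine sum_congr rfl fun σ _ => ?_
  rw [← sum_add_distrib, ← sum_neg_distrib]
  refine sum_congr rfl fun w _ => ?_
  ring

/-- grouped force on the first bead of a particle in bosonic PIMD with PBC
(`P ≥ 2`). Minus the partial derivative of `V` w.r.t. `(r_ℓ^1)_i` equals the contributions
of the exterior spring entering bead `1` of particle `ℓ`, weighted by the joint
connectivity–winding probabilities, plus the contribution of the interior spring to bead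
`2`, weighted by the marginal winding probability. -/
theorem stmt14 (N P d W : ℕ) [NeZero N] [NeZero P] (hP : 2 ≤ P) (hd : 0 < d)
    (β L c : ℝ) (hβ : 0 < β) (hL : 0 < L) (hc : 0 < c)
    (r : Fin N → Fin P → Fin d → ℝ) (ℓ : Fin N) (i : Fin d) :
    HasDerivAt (fun t => Vb N P d W β c L (updR r ℓ 0 i t))
      (-((∑ ℓ' : Fin N, ∑ w ∈ windowSet d W,
            ((∑ σ ∈ Finset.univ.filter (fun σ : Equiv.Perm (Fin N) => σ ℓ' = ℓ),
                ∑ w' ∈ (WAll N P d W).filter (fun w' => w' ℓ' (lastIdx P) = w),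
                  Real.exp (-(β * Eperm N P d c L r σ w'))) /
                ((Nat.factorial N : ℝ) * Zb N P d W β c L r)) *
              ((-2 * c) * (r ℓ 0 i - r ℓ' (lastIdx P) i - (w i : ℝ) * L))) +
          ∑ w ∈ windowSet d W,
            ((∑ σ : Equiv.Perm (Fin N),
                ∑ w' ∈ (WAll N P d W).filter (fun w' => w' ℓ 0 = w),
                  Real.exp (-(β * Eperm N P d c L r σ w'))) /
                ((Nat.factorial N : ℝ) * Zb N P d W β c L r)) *
              ((-2 * c) * (r ℓ 0 i + (w i : ℝ) * L - r ℓ 1 i))))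
      (r ℓ 0 i) :=
  stmt14_general N P d W hP β L c hβ r ℓ i

end
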